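/- Let m ≥ 1, let y be a partition of [0,1] of size m, let f : [0,1] → [0,1] be a continuous map which is Markov for y, and let N be the incidence matrix of f with respect to y, regarded as a matrix with natural-number entries. Then for every p ≥ 1 and all indices i, j: the (i,j) entry of N^p is positive if and only if I_i ⊆ f^p(I_j). -/

import Mathlib

open Set Matrix

/-- A partition of `[0,1]` of size `m`: a strictly increasing map
`{0,1,…,m} → ℝ` with first value `0` and last value `1`. -/
structure UnitPartition (m : ℕ) where
  pts : Fin (m + 1) → ℝ
  strictMono : StrictMono pts
  zero : pts 0 = 0
  one : pts (Fin.last m) = 1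

/-- The `j`-th interval `I_j = [y(j-1), y(j)]` of a partition, for `j = 1, …, m`. -/
def UnitPartition.interval {m : ℕ} (y : UnitPartition m) (j : Fin m) : Set ℝ :=
  Set.Icc (y.pts j.castSucc) (y.pts j.succ)

/-- `f` is Markov for the partition `y`. -/
def IsMarkov {m : ℕ} (y : UnitPartition m) (f : ℝ → ℝ) : Prop :=
  ∀ j : Fin m, ∃ a b : Fin (m + 1), a ≤ b ∧
    f '' y.interval j = Set.Icc (y.pts a) (y.pts b)

open Classical in
/-- The incidence matrix of `f` with respect to `y`, with natural-number entries:
`N i j = 1` if `I_i ⊆ f(I_j)` and `0` otherwise. -/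
noncomputable def incidence {m : ℕ} (y : UnitPartition m) (f : ℝ → ℝ) :
    Matrix (Fin m) (Fin m) ℕ :=
  Matrix.of fun i j => if y.interval i ⊆ f '' y.interval j then 1 else 0

open Classical in
/-- The incidence matrix of `f` with respect to `y`, regarded as a real matrix. -/
noncomputable def incidenceR {m : ℕ} (y : UnitPartition m) (f : ℝ → ℝ) :
    Matrix (Fin m) (Fin m) ℝ :=
  Matrix.of fun i j => if y.interval i ⊆ f '' y.interval j then 1 else 0

/-!
The `p`-th image of a partition interval is always either a subsingleton or an interval
`[y a, y b]` with partition endpoints: `f` maps such an interval, a union of partition intervals,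
onto a compact connected set that is a union of Markov images `[y c, y d]`, so its extreme points
are partition points. An interval `[y a, y b]` that meets the interior of `I_i` contains `I_i`.
Hence `I_i ⊆ f (f^p I_j)` holds exactly when `I_i ⊆ f I_k` for some `I_k ⊆ f^p I_j`, which is the
recursion `(N^(p+1)) i j = ∑ k, N i k * (N^p) k j` read through positivity.
-/

theorem Matrix.mul_apply_pos_iff {ι R : Type*} [Fintype ι] [CommSemiring R] [PartialOrder R]
    [CanonicallyOrderedAdd R] [NoZeroDivisors R] (A B : Matrix ι ι R) (i j : ι) :
    0 < (A * B) i j ↔ ∃ k, 0 < A i k ∧ 0 < B k j := by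
  simp [Matrix.mul_apply, Finset.sum_pos_iff, CanonicallyOrderedAdd.mul_pos]

theorem Monotone.exists_mem_Icc_map_succ {α β : Type*} [LinearOrder α] [SuccOrder α]
    [IsSuccArchimedean α] [LinearOrder β] {g : α → β} (hg : Monotone g) {a b : α} (hab : a < b)
    {x : β} (hx : x ∈ Icc (g a) (g b)) : ∃ i ∈ Ico a b, x ∈ Icc (g i) (g (Order.succ i)) := by
  rcases hx.1.eq_or_lt with rfl | hax
  · exact ⟨a, ⟨le_rfl, hab⟩, le_rfl, hg (Order.le_succ a)⟩
  · have hx' : x ∈ ⋃ i ∈ Ico a b, Ioc (g i) (g (Order.succ i)) := by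
      rw [hg.biUnion_Ico_Ioc_map_succ]
      exact ⟨hax, hx.2⟩
    obtain ⟨i, hi, hxi⟩ := mem_iUnion₂.1 hx'
    exact ⟨i, hi, Ioc_subset_Icc_self hxi⟩

theorem exists_eq_Icc_of_forall_mem_Icc_subset {α ι : Type*} [ConditionallyCompleteLinearOrder α]
    [TopologicalSpace α] [OrderTopology α] (g : ι → α) {E : Set α} (hconn : IsConnected E)
    (hcpt : IsCompact E) (h : ∀ x ∈ E, ∃ a b, x ∈ Icc (g a) (g b) ∧ Icc (g a) (g b) ⊆ E) :
    ∃ a b, E = Icc (g a) (g b) := by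
  obtain ⟨a, a', hinf, ha⟩ := h _ (hcpt.sInf_mem hconn.nonempty)
  obtain ⟨b', b, hsup, hb⟩ := h _ (hcpt.sSup_mem hconn.nonempty)
  have hga : g a = sInf E :=
    le_antisymm hinf.1 (csInf_le hcpt.bddBelow (ha (left_mem_Icc.2 (hinf.1.trans hinf.2))))
  have hgb : g b = sSup E :=
    le_antisymm (le_csSup hcpt.bddAbove (hb (right_mem_Icc.2 (hsup.1.trans hsup.2)))) hsup.2
  exact ⟨a, b, by rw [hga, hgb]; exact eq_Icc_of_connected_compact hconn hcpt⟩

namespace UnitPartition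

variable {m : ℕ} (y : UnitPartition m)

theorem pts_mono : Monotone y.pts := y.strictMono.monotone

theorem pts_lt_pts_succ (i : Fin m) : y.pts i.castSucc < y.pts i.succ :=
  y.strictMono Fin.castSucc_lt_succ

theorem Icc_pts_subset_unitInterval (a b : Fin (m + 1)) : Icc (y.pts a) (y.pts b) ⊆ Icc 0 1 := by
  refine Icc_subset_Icc ?_ ?_
  · rw [← y.zero]; exact y.pts_mono (Fin.zero_le a)
  · rw [← y.one]; exact y.pts_mono (Fin.le_last b)

theorem not_subsingleton_interval (i : Fin m) : ¬ (y.interval i).Subsingleton := fun h =>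
  (y.pts_lt_pts_succ i).ne (h (left_mem_Icc.2 (y.pts_lt_pts_succ i).le)
    (right_mem_Icc.2 (y.pts_lt_pts_succ i).le))

theorem exists_mem_interval_subset {a b : Fin (m + 1)} (hab : a < b) {x : ℝ}
    (hx : x ∈ Icc (y.pts a) (y.pts b)) :
    ∃ k, x ∈ y.interval k ∧ y.interval k ⊆ Icc (y.pts a) (y.pts b) := by
  obtain ⟨i, ⟨hai, hib⟩, hxi⟩ := y.pts_mono.exists_mem_Icc_map_succ hab hx
  obtain ⟨k, rfl⟩ := Fin.eq_castSucc_of_ne_last (hib.trans_le (Fin.le_last b)).ne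
  rw [Fin.orderSucc_castSucc] at hxi
  exact ⟨k, hxi, Icc_subset_Icc (y.pts_mono hai) (y.pts_mono (Fin.castSucc_lt_iff_succ_le.1 hib))⟩

theorem interval_subset_Icc_of_mem_Ioo {i : Fin m} {a b : Fin (m + 1)} {x : ℝ}
    (hxi : x ∈ Ioo (y.pts i.castSucc) (y.pts i.succ)) (hx : x ∈ Icc (y.pts a) (y.pts b)) :
    y.interval i ⊆ Icc (y.pts a) (y.pts b) := by
  have hai : a < i.succ := y.strictMono.lt_iff_lt.1 (hx.1.trans_lt hxi.2)
  have hib : i.castSucc < b := y.strictMono.lt_iff_lt.1 (hxi.1.trans_le hx.2)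
  exact Icc_subset_Icc (y.pts_mono (Fin.le_castSucc_iff.2 hai))
    (y.pts_mono (Fin.castSucc_lt_iff_succ_le.1 hib))

end UnitPartition

section Markov

variable {m : ℕ} {y : UnitPartition m} {f : ℝ → ℝ}

theorem incidence_pos_iff (i j : Fin m) :
    0 < incidence y f i j ↔ y.interval i ⊆ f '' y.interval j := by
  classical
  simp only [incidence, Matrix.of_apply]
  split_ifs with h <;> simp [h]

theorem IsMarkov.exists_image_Icc_eq_Icc (hf : IsMarkov y f) (hcont : ContinuousOn f (Icc 0 1))
    {a b : Fin (m + 1)} (hab : a < b) :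
    ∃ c d, f '' Icc (y.pts a) (y.pts b) = Icc (y.pts c) (y.pts d) := by
  have hcont' := hcont.mono (y.Icc_pts_subset_unitInterval a b)
  refine exists_eq_Icc_of_forall_mem_Icc_subset y.pts
    ((isConnected_Icc (y.pts_mono hab.le)).image f hcont')
    (isCompact_Icc.image_of_continuousOn hcont') ?_
  rintro _ ⟨z, hz, rfl⟩
  obtain ⟨k, hzk, hk⟩ := y.exists_mem_interval_subset hab hz
  obtain ⟨c, d, -, hcd⟩ := hf k
  exact ⟨c, d, hcd ▸ mem_image_of_mem f hzk, hcd ▸ image_mono hk⟩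

theorem IsMarkov.iterate_image_interval_subsingleton_or_eq_Icc (hf : IsMarkov y f)
    (hcont : ContinuousOn f (Icc 0 1)) (p : ℕ) (j : Fin m) :
    (f^[p] '' y.interval j).Subsingleton ∨
      ∃ a b, f^[p] '' y.interval j = Icc (y.pts a) (y.pts b) := by
  induction p with
  | zero => exact Or.inr ⟨j.castSucc, j.succ, by simp [UnitPartition.interval]⟩
  | succ p ih =>
    rw [Function.iterate_succ', image_comp]
    rcases ih with hsub | ⟨a, b, hab⟩
    · exact Or.inl (hsub.image f)
    · rw [hab]
      rcases lt_or_ge a b with hlt | hge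
      · exact Or.inr (hf.exists_image_Icc_eq_Icc hcont hlt)
      · exact Or.inl ((subsingleton_Icc_of_ge (y.pts_mono hge)).image f)

theorem IsMarkov.interval_subset_image_iff (hf : IsMarkov y f) {S : Set ℝ}
    (hS : S.Subsingleton ∨ ∃ a b, S = Icc (y.pts a) (y.pts b)) (i : Fin m) :
    y.interval i ⊆ f '' S ↔ ∃ k, y.interval i ⊆ f '' y.interval k ∧ y.interval k ⊆ S := by
  refine ⟨fun hi => ?_, fun ⟨k, hik, hk⟩ => hik.trans (image_mono hk)⟩
  have hnot : ¬ (f '' S).Subsingleton := fun h => y.not_subsingleton_interval i (h.anti hi)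
  obtain ⟨a, b, rfl⟩ := hS.resolve_left fun h => hnot (h.image f)
  have hab : a < b := lt_of_not_ge fun hba =>
    hnot ((subsingleton_Icc_of_ge (y.pts_mono hba)).image f)
  obtain ⟨x, hx⟩ := exists_between (y.pts_lt_pts_succ i)
  obtain ⟨z, hz, hzx⟩ := hi ⟨hx.1.le, hx.2.le⟩
  obtain ⟨k, hzk, hk⟩ := y.exists_mem_interval_subset hab hz
  obtain ⟨c, d, -, hcd⟩ := hf k
  have hxk : x ∈ Icc (y.pts c) (y.pts d) := hcd ▸ hzx ▸ mem_image_of_mem f hzk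
  exact ⟨k, hcd ▸ y.interval_subset_Icc_of_mem_Ioo hx hxk, hk⟩

end Markov

theorem incidence_pow_pos_iff_subset_general
    (m : ℕ) (y : UnitPartition m) (f : ℝ → ℝ)
    (hcont : ContinuousOn f (Set.Icc 0 1))
    (hMarkov : IsMarkov y f) :
    ∀ p : ℕ, 1 ≤ p → ∀ i j : Fin m,
      0 < (incidence y f ^ p) i j ↔ y.interval i ⊆ f^[p] '' y.interval j := by
  intro p hp
  induction p, hp using Nat.le_induction with
  | base => simpa using incidence_pos_iff
  | succ p _ ih =>
    intro i j
    rw [pow_succ', Matrix.mul_apply_pos_iff, Function.iterate_succ', image_comp,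
      hMarkov.interval_subset_image_iff
        (hMarkov.iterate_image_interval_subsingleton_or_eq_Icc hcont p j)]
    simp only [incidence_pos_iff, ih]

theorem incidence_pow_pos_iff_subset
    (m : ℕ) (hm : 1 ≤ m) (y : UnitPartition m) (f : ℝ → ℝ)
    (hmaps : Set.MapsTo f (Set.Icc 0 1) (Set.Icc 0 1))
    (hcont : ContinuousOn f (Set.Icc 0 1))
    (hMarkov : IsMarkov y f) :
    ∀ p : ℕ, 1 ≤ p → ∀ i j : Fin m,
      0 < (incidence y f ^ p) i j ↔ y.interval i ⊆ f^[p] '' y.interval j :=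
  incidence_pow_pos_iff_subset_general m y f hcont hMarkov
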